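/- Let 0 < h < 1/4 and g(x) = 1/x - (1-x)(1-√(1-4hx))/(2hx^2), with iterates g^{∘n}. Then the limit Π(x) = lim_{n→∞} (g^{∘n}(x) - g^{∘n}(0)) / (g^{∘n})'(0) exists for x ∈ [0,1) and equals (1/√(1-4h)) · (1 - (1-x)·((√(1-4h)+1)/(√(1-4h)+√(1-4hx)))²). -/

import Mathlib

/-- The offspring generating function `g_λ`, extended continuously at `0` by `g(0) = 1-h`. -/
noncomputable def gGen (h : ℝ) (x : ℝ) : ℝ :=
  if x = 0 then 1 - h
  else 1/x - (1 - x) * (1 - Real.sqrt (1 - 4*h*x)) / (2*h*x^2)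

open Filter Topology

/-!
Substituting `x = (1 - s²)/(4h)` turns `g` into the Möbius map `s ↦ 1 - 4h/(1 + s)`, whose fixed
points are `±q` with `q = √(1 - 4h)`. The Cayley transform `v ↦ q(1 + v)/(1 - v)` conjugates this
map to `v ↦ r v` with `r = (1 - q)/(1 + q)`. Hence `g^[n] x = κ⁻¹ (rⁿ κ x)` for the Koenigs function
`κ x = (√(1 - 4hx) - q)/(√(1 - 4hx) + q)`, whose inverse is `1 - (q²/h) k` with the Koebe function
`k v = v/(1 - v)²`. By the chain rule `(g^[n])'(0) = (κ⁻¹)'(rⁿ⁺¹) rⁿ κ'(0)`, so the ratio in the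
theorem is a difference quotient of `k` at scale `t = rⁿ → 0`, and it tends to `(κ x - r)/κ'(0)`.
-/

theorem gGen_one_sub_sq_div {h s : ℝ} (hh : h ≠ 0) (hs : 0 ≤ s) :
    gGen h ((1 - s ^ 2) / (4 * h)) = (1 - (1 - 4 * h / (1 + s)) ^ 2) / (4 * h) := by
  rcases eq_or_ne s 1 with rfl | hs1
  · simp only [gGen, one_pow, sub_self, zero_div, if_true]
    field_simp
    ring
  have hs1' : 1 - s ≠ 0 := sub_ne_zero.mpr (Ne.symm hs1)
  have hs2 : 1 + s ≠ 0 := by positivity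
  have hx : 1 - s ^ 2 ≠ 0 := by
    rw [show 1 - s ^ 2 = (1 - s) * (1 + s) by ring]
    exact mul_ne_zero hs1' hs2
  have hsqrt : Real.sqrt (1 - 4 * h * ((1 - s ^ 2) / (4 * h))) = s := by
    rw [show 1 - 4 * h * ((1 - s ^ 2) / (4 * h)) = s ^ 2 by field_simp; ring]
    exact Real.sqrt_sq hs
  rw [gGen, if_neg (div_ne_zero hx (by positivity)), hsqrt]
  field_simp
  ring

theorem mobius_cayley_conj {h q v : ℝ} (hq : q ^ 2 = 1 - 4 * h) (hq0 : 0 < q)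
    (hv0 : 0 ≤ v) (hv1 : v < 1) :
    1 - 4 * h / (1 + q * (1 + v) / (1 - v))
      = q * (1 + (1 - q) / (1 + q) * v) / (1 - (1 - q) / (1 + q) * v) := by
  have h1 : 0 < 1 - v := by linarith
  have h2 : 0 < 1 + q := by linarith
  have h3 : 0 < 1 + q - v * (1 - q) := by nlinarith
  have h4 : 0 < 1 - v + q * (1 + v) := by positivity
  field_simp
  linear_combination -(1 - v) * (1 + q - v * (1 - q)) * hq

noncomputable def koebe (v : ℝ) : ℝ := v / (1 - v) ^ 2

noncomputable def koenigs (h q x : ℝ) : ℝ :=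
  (Real.sqrt (1 - 4 * h * x) - q) / (Real.sqrt (1 - 4 * h * x) + q)

noncomputable def koenigsInv (h q v : ℝ) : ℝ := 1 - q ^ 2 / h * koebe v

theorem koenigsInv_eq_one_sub_sq_div {h q v : ℝ} (hh : h ≠ 0) (hq : q ^ 2 = 1 - 4 * h)
    (hv : v ≠ 1) :
    koenigsInv h q v = (1 - (q * (1 + v) / (1 - v)) ^ 2) / (4 * h) := by
  have hv' : 1 - v ≠ 0 := sub_ne_zero.mpr hv.symm
  rw [koenigsInv, koebe]
  field_simp
  linear_combination (1 - v) ^ 2 * hq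

theorem gGen_koenigsInv {h q v : ℝ} (hh : h ≠ 0) (hq : q ^ 2 = 1 - 4 * h) (hq0 : 0 < q)
    (hv0 : 0 ≤ v) (hv1 : v < 1) :
    gGen h (koenigsInv h q v) = koenigsInv h q ((1 - q) / (1 + q) * v) := by
  have hrv : (1 - q) / (1 + q) * v < 1 := by
    have : (1 - q) / (1 + q) < 1 := (div_lt_one (by linarith)).mpr (by linarith)
    nlinarith
  have hσ : 0 ≤ q * (1 + v) / (1 - v) := div_nonneg (by positivity) (by linarith)
  rw [koenigsInv_eq_one_sub_sq_div hh hq hv1.ne, gGen_one_sub_sq_div hh hσ,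
    mobius_cayley_conj hq hq0 hv0 hv1, ← koenigsInv_eq_one_sub_sq_div hh hq hrv.ne]

theorem koenigsInv_koenigs {h q x : ℝ} (hh : h ≠ 0) (hq : q ^ 2 = 1 - 4 * h) (hq0 : 0 < q)
    (hx : 0 ≤ 1 - 4 * h * x) : koenigsInv h q (koenigs h q x) = x := by
  have hs := Real.sqrt_nonneg (1 - 4 * h * x)
  have hsq := Real.sq_sqrt hx
  have hsq0 : 0 < Real.sqrt (1 - 4 * h * x) + q := by positivity
  have hκ : koenigs h q x < 1 := (div_lt_one hsq0).mpr (by linarith)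
  have hσ : q * (1 + koenigs h q x) / (1 - koenigs h q x) = Real.sqrt (1 - 4 * h * x) := by
    have hden : Real.sqrt (1 - 4 * h * x) + q - (Real.sqrt (1 - 4 * h * x) - q) ≠ 0 := by
      linarith
    rw [koenigs]
    field_simp
    ring
  rw [koenigsInv_eq_one_sub_sq_div hh hq hκ.ne, hσ, hsq]
  field_simp
  ring

theorem koenigs_nonneg {h q x : ℝ} (hh : 0 ≤ h) (hq : q ^ 2 = 1 - 4 * h) (hq0 : 0 < q)
    (hx : x ≤ 1) : 0 ≤ koenigs h q x := by
  have : q ≤ Real.sqrt (1 - 4 * h * x) := Real.le_sqrt_of_sq_le (by nlinarith)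
  exact div_nonneg (by linarith) (by positivity)

theorem koenigs_lt_one {h q : ℝ} (hq0 : 0 < q) (x : ℝ) : koenigs h q x < 1 :=
  (div_lt_one (by positivity)).mpr (by linarith)

theorem koenigs_zero (h q : ℝ) : koenigs h q 0 = (1 - q) / (1 + q) := by
  simp [koenigs]

theorem iterate_gGen_koenigsInv {h q v : ℝ} (hh : 0 < h) (hq : q ^ 2 = 1 - 4 * h) (hq0 : 0 < q)
    (hv0 : 0 ≤ v) (hv1 : v < 1) (n : ℕ) :
    (gGen h)^[n] (koenigsInv h q v) = koenigsInv h q (((1 - q) / (1 + q)) ^ n * v) := by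
  have hr0 : 0 ≤ (1 - q) / (1 + q) := div_nonneg (by nlinarith) (by linarith)
  have hr1 : (1 - q) / (1 + q) ≤ 1 := (div_le_one (by linarith)).mpr (by linarith)
  induction n with
  | zero => simp
  | succ n ih =>
    have hpow := pow_le_one₀ hr0 hr1 (n := n)
    rw [Function.iterate_succ_apply', ih,
      gGen_koenigsInv hh.ne' hq hq0 (by positivity) (by nlinarith), pow_succ', mul_assoc]

theorem iterate_gGen_eq_koenigsInv {h q x : ℝ} (hh : 0 < h) (hq : q ^ 2 = 1 - 4 * h)
    (hq0 : 0 < q) (hx : x ≤ 1) (n : ℕ) :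
    (gGen h)^[n] x = koenigsInv h q (((1 - q) / (1 + q)) ^ n * koenigs h q x) := by
  conv_lhs => rw [← koenigsInv_koenigs hh.ne' hq hq0 (x := x) (by nlinarith)]
  exact iterate_gGen_koenigsInv hh hq hq0 (koenigs_nonneg hh.le hq hq0 hx) (koenigs_lt_one hq0 x) n

theorem hasDerivAt_koebe {v : ℝ} (hv : v ≠ 1) :
    HasDerivAt koebe ((1 + v) / (1 - v) ^ 3) v := by
  have hv' : 1 - v ≠ 0 := sub_ne_zero.mpr hv.symm
  refine ((hasDerivAt_id' v).fun_div (((hasDerivAt_id' v).const_sub 1).fun_pow 2)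
    (pow_ne_zero 2 hv')).congr_deriv ?_
  field_simp
  ring

theorem hasDerivAt_koenigsInv (h q : ℝ) {v : ℝ} (hv : v ≠ 1) :
    HasDerivAt (koenigsInv h q) (-(q ^ 2 / h * ((1 + v) / (1 - v) ^ 3))) v :=
  ((hasDerivAt_koebe hv).const_mul _).const_sub 1

theorem hasDerivAt_koenigs_zero {h q : ℝ} (hq : q ^ 2 = 1 - 4 * h) (hq0 : 0 < q) :
    HasDerivAt (koenigs h q) (-(q * ((1 - q) / (1 + q)))) 0 := by
  have hsqrt : HasDerivAt (fun x => Real.sqrt (1 - 4 * h * x)) (-(4 * h) / 2) 0 := by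
    simpa using (((hasDerivAt_id (0 : ℝ)).const_mul (4 * h)).const_sub 1).sqrt (by simp)
  refine ((hsqrt.sub_const q).fun_div (hsqrt.add_const q) (by positivity)).congr_deriv ?_
  simp only [mul_zero, sub_zero, Real.sqrt_one]
  field_simp
  linear_combination (-2 * q) * hq

noncomputable def koebeSlope (a b t : ℝ) : ℝ :=
  (koebe (t * a) - koebe (t * b)) / (t * ((1 + t * b) / (1 - t * b) ^ 3))

theorem tendsto_koebeSlope (a b : ℝ) : Tendsto (koebeSlope a b) (𝓝[≠] 0) (𝓝 (a - b)) := by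
  have hF : ContinuousAt (fun t : ℝ =>
      (a - b) * (1 - t ^ 2 * a * b) * (1 - t * b) / ((1 - t * a) ^ 2 * (1 + t * b))) 0 :=
    ContinuousAt.div (by fun_prop) (by fun_prop) (by simp)
  have hne : ∀ c : ℝ, ∀ᶠ t in 𝓝[≠] (0 : ℝ), 1 + c * t ≠ 0 := fun c =>
    nhdsWithin_le_nhds <| ContinuousAt.eventually_ne (by fun_prop) (by simp)
  have hlim := hF.tendsto.mono_left (nhdsWithin_le_nhds (s := {0}ᶜ))
  simp only [ne_eq, OfNat.ofNat_ne_zero, not_false_eq_true, zero_pow, zero_mul, sub_zero, mul_one,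
    add_zero, one_pow, div_one] at hlim
  refine hlim.congr' ?_
  filter_upwards [self_mem_nhdsWithin, hne (-a), hne (-b), hne b] with t ht ha hb hb'
  simp only [neg_mul, ← sub_eq_add_neg] at ha hb
  simp only [Set.mem_compl_iff, Set.mem_singleton_iff] at ht
  rw [koebeSlope, koebe, koebe]
  field_simp
  ring

theorem iterate_gGen_sub_div_eq_koebeSlope {h q x D : ℝ} (hh : 0 < h) (hq : q ^ 2 = 1 - 4 * h)
    (hq0 : 0 < q) (hx : x ≤ 1) (n : ℕ) (hD : HasDerivAt (gGen h)^[n] D 0) :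
    ((gGen h)^[n] x - (gGen h)^[n] 0) / D =
      koebeSlope (koenigs h q x) ((1 - q) / (1 + q)) (((1 - q) / (1 + q)) ^ n)
        / (-(q * ((1 - q) / (1 + q)))) := by
  set r := (1 - q) / (1 + q) with hr
  set t := r ^ n with ht
  have hr0 : 0 < r := div_pos (by nlinarith) (by linarith)
  have hr1 : r < 1 := (div_lt_one (by linarith)).mpr (by linarith)
  have ht0 : 0 < t := pow_pos hr0 n
  have htr : t * r < 1 := by nlinarith [pow_le_one₀ hr0.le hr1.le (n := n)]
  have hconj : (gGen h)^[n] =ᶠ[𝓝 0] fun y => koenigsInv h q (t * koenigs h q y) := by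
    filter_upwards [Iic_mem_nhds one_pos] with y hy
    exact iterate_gGen_eq_koenigsInv hh hq hq0 hy n
  have hchain := (hasDerivAt_koenigsInv h q (v := t * koenigs h q 0) (by
    rw [koenigs_zero]; exact htr.ne)).comp 0 ((hasDerivAt_koenigs_zero hq hq0).const_mul t)
  rw [koenigs_zero, ← hr] at hchain
  rw [hD.unique (hchain.congr_of_eventuallyEq hconj), iterate_gGen_eq_koenigsInv hh hq hq0 hx,
    iterate_gGen_eq_koenigsInv hh hq hq0 zero_le_one, koenigs_zero, ← hr, ← ht, koenigsInv,
    koenigsInv, koebeSlope]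
  have : 1 - t * r ≠ 0 := by linarith
  have : 1 + t * r ≠ 0 := by positivity
  field_simp
  ring

theorem koenigs_sub_div_eq {h q x : ℝ} (hh : h ≠ 0) (hq : q ^ 2 = 1 - 4 * h) (hq0 : 0 < q)
    (hx : 0 ≤ 1 - 4 * h * x) :
    (koenigs h q x - (1 - q) / (1 + q)) / (-(q * ((1 - q) / (1 + q))))
      = 1 / q * (1 - (1 - x) * ((q + 1) / (q + Real.sqrt (1 - 4 * h * x))) ^ 2) := by
  have hs := Real.sq_sqrt hx
  have : 0 < q + Real.sqrt (1 - 4 * h * x) := by positivity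
  have : 1 - q ≠ 0 := by intro h1; apply hh; nlinarith
  rw [koenigs]
  field_simp
  linear_combination (q + Real.sqrt (1 - 4 * h * x)) * (1 + q) * (x * hq - hs)

/-- for `0 < h < 1/4`, the limit
`Π(x) = lim_n (g^{∘n}(x) - g^{∘n}(0))/(g^{∘n})'(0)` exists for `x ∈ [0,1)` and equals
`(1/√(1-4h)) (1 - (1-x)((√(1-4h)+1)/(√(1-4h)+√(1-4hx)))²)`. -/
theorem stmt_9 (h : ℝ) (hh : 0 < h) (hh4 : h < 1/4)
    (d : ℕ → ℝ) (hd : ∀ n : ℕ, HasDerivAt ((gGen h)^[n]) (d n) 0) :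
    ∀ x ∈ Set.Ico (0 : ℝ) 1,
      Filter.Tendsto (fun n : ℕ => ((gGen h)^[n] x - (gGen h)^[n] 0) / d n)
        Filter.atTop
        (nhds ((1 / Real.sqrt (1 - 4*h)) *
          (1 - (1 - x) * ((Real.sqrt (1 - 4*h) + 1) /
            (Real.sqrt (1 - 4*h) + Real.sqrt (1 - 4*h*x)))^2))) := by
  rintro x ⟨-, hx1⟩
  set q := Real.sqrt (1 - 4 * h)
  have hq : q ^ 2 = 1 - 4 * h := Real.sq_sqrt (by linarith)
  have hq0 : 0 < q := Real.sqrt_pos.mpr (by linarith)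
  have hr0 : 0 < (1 - q) / (1 + q) := div_pos (by nlinarith) (by linarith)
  have hr1 : (1 - q) / (1 + q) < 1 := (div_lt_one (by linarith)).mpr (by linarith)
  have hpow : Tendsto (fun n : ℕ => ((1 - q) / (1 + q)) ^ n) atTop (𝓝[≠] 0) :=
    tendsto_nhdsWithin_iff.mpr ⟨tendsto_pow_atTop_nhds_zero_of_lt_one hr0.le hr1,
      Eventually.of_forall fun n => (pow_pos hr0 n).ne'⟩
  have hlim := ((tendsto_koebeSlope (koenigs h q x) ((1 - q) / (1 + q))).comp hpow).div_const
    (-(q * ((1 - q) / (1 + q))))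
  rw [koenigs_sub_div_eq hh.ne' hq hq0 (by nlinarith)] at hlim
  exact hlim.congr fun n => (iterate_gGen_sub_div_eq_koebeSlope hh hq hq0 hx1.le n (hd n)).symm
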